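/- Let a_L be the Liouville 1-form on ℝ², a_L(x,y)(v) = x·v₂. There do not exist a local diffeomorphism φ of ℝ² at the origin with φ(0) = 0 and smooth nonvanishing functions κ, λ near 0 such that a_L = κ·φ*(a_L) and x − y² = λ·((y − x²) ∘ φ) on a neighborhood of the origin. In other words, the germs x − y² and y − x² are not K_{a_L}-equivalent, and hence the vector fields (x − y²)·X_L and (y − x²)·X_L, where X_L(x,y) = (−x, 0), are not orbitally a_L-conjugate, even though both have codimension 2. -/

import Mathlib

noncomputable section

/-- The Liouville 1-form `a_L(x,y)(v) = x·v₂`. -/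
def aL : ℝ × ℝ → ((ℝ × ℝ) →L[ℝ] ℝ) :=
  fun p => p.1 • ContinuousLinearMap.snd ℝ ℝ ℝ

/-- The vector field `X_L(x,y) = (−x, 0)`. -/
def XL : ℝ × ℝ → ℝ × ℝ := fun p => (-p.1, 0)

/-! Since `a_L` vanishes exactly on the axis `{x = 0}`, the relation `a_L = κ·φ*a_L` forces `φ` to
preserve that axis, so `Dφ(0)(0,1)` has vanishing first component. In the first case, restricting
`x − y² = λ·((y − x²) ∘ φ)` to the axis gives `(φ(0,t))₂ = −t²/λ(0,t)`. In the second case the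
vector fields vanish on the parabola `x = y²` away from the axis, so `φ` maps it into `y = x²`
and along `t ↦ (t², t)` the second component of `φ` is the square of the first. Either way the
second component of `Dφ(0)(0,1)` vanishes too, contradicting the invertibility of `Dφ(0)`. -/

open Filter Topology

lemma exists_continuousLinearEquiv_of_det_ne_zero {E : Type*} [NormedAddCommGroup E]
    [NormedSpace ℝ E] [FiniteDimensional ℝ E] {f : E →L[ℝ] E} (hf : f.det ≠ 0) :
    ∃ e : E ≃L[ℝ] E, (e : E →L[ℝ] E) = f := by
  have h : LinearMap.det (f : E →ₗ[ℝ] E) ≠ 0 := hf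
  refine ⟨(LinearMap.equivOfDetNeZero _ h).toContinuousLinearEquiv,
    ContinuousLinearMap.ext fun x => ?_⟩
  simp [LinearEquiv.coe_toContinuousLinearEquiv']

lemma apply_ne_zero_of_det_ne_zero {E : Type*} [NormedAddCommGroup E] [NormedSpace ℝ E]
    [FiniteDimensional ℝ E] {f : E →L[ℝ] E} (hf : f.det ≠ 0) {v : E} (hv : v ≠ 0) : f v ≠ 0 := by
  obtain ⟨e, rfl⟩ := exists_continuousLinearEquiv_of_det_ne_zero hf
  simpa using hv

lemma fst_eq_zero_iff_of_aL_eq_smul_comp {L : ℝ × ℝ →L[ℝ] ℝ × ℝ} (hL : L.det ≠ 0) {c : ℝ}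
    (hc : c ≠ 0) {p q : ℝ × ℝ} (h : aL p = c • (aL q).comp L) : p.1 = 0 ↔ q.1 = 0 := by
  have hv (v : ℝ × ℝ) : p.1 * v.2 = c * (q.1 * (L v).2) := by
    simpa [aL, mul_comm] using ContinuousLinearMap.ext_iff.mp h v
  constructor
  · intro hp
    obtain ⟨e, rfl⟩ := exists_continuousLinearEquiv_of_det_ne_zero hL
    simpa [hp, hc] using hv (e.symm (0, 1))
  · intro hq
    simpa [hq] using hv (0, 1)

lemma eq_zero_of_inverse_smul_XL_eq_zero {L : ℝ × ℝ →L[ℝ] ℝ × ℝ} (hL : L.det ≠ 0)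
    {q : ℝ × ℝ} (hq : q.1 ≠ 0) {s : ℝ} (h : L.inverse (s • XL q) = 0) : s = 0 := by
  obtain ⟨e, rfl⟩ := exists_continuousLinearEquiv_of_det_ne_zero hL
  rw [ContinuousLinearMap.inverse_equiv] at h
  simpa [XL, hq] using congrArg Prod.fst (e.symm.map_eq_zero_iff.mp h)

lemma hasDerivAt_sq_mul_zero {g : ℝ → ℝ} (hg : DifferentiableAt ℝ g 0) :
    HasDerivAt (fun t => t ^ 2 * g t) 0 0 :=
  ((hasDerivAt_pow 2 (0 : ℝ)).mul hg.hasDerivAt).congr_deriv (by simp)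

lemma hasDerivAt_sq_zero {u : ℝ → ℝ} {u' : ℝ} (hu : HasDerivAt u u' 0) (hu0 : u 0 = 0) :
    HasDerivAt (fun t => u t ^ 2) 0 0 :=
  (hu.pow 2).congr_deriv (by simp [hu0])

lemma hasDerivAt_comp_curve {φ : ℝ × ℝ → ℝ × ℝ} (hφ : DifferentiableAt ℝ φ 0)
    {γ : ℝ → ℝ × ℝ} {v : ℝ × ℝ} (hγ : HasDerivAt γ v 0) (hγ0 : γ 0 = 0) :
    HasDerivAt (fun t => (φ (γ t)).1) (fderiv ℝ φ 0 v).1 0 ∧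
      HasDerivAt (fun t => (φ (γ t)).2) (fderiv ℝ φ 0 v).2 0 := by
  have h := hφ.hasFDerivAt.comp_hasDerivAt_of_eq 0 hγ hγ0.symm
  exact ⟨(ContinuousLinearMap.fst ℝ ℝ ℝ).hasFDerivAt.comp_hasDerivAt 0 h,
    (ContinuousLinearMap.snd ℝ ℝ ℝ).hasFDerivAt.comp_hasDerivAt 0 h⟩

lemma hasDerivAt_yAxis : HasDerivAt (fun t : ℝ => ((0 : ℝ), t)) (0, 1) 0 :=
  (hasDerivAt_const 0 0).prodMk (hasDerivAt_id 0)

lemma hasDerivAt_parabola : HasDerivAt (fun t : ℝ => (t ^ 2, t)) (0, 1) 0 := by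
  simpa using (hasDerivAt_pow 2 (0 : ℝ)).prodMk (hasDerivAt_id 0)

lemma eventually_mem_of_continuousAt {W : Set (ℝ × ℝ)} (hW : IsOpen W) (h0 : (0 : ℝ × ℝ) ∈ W)
    {γ : ℝ → ℝ × ℝ} (hγ : ContinuousAt γ 0) (hγ0 : γ 0 = 0) : ∀ᶠ t in 𝓝 0, γ t ∈ W :=
  hγ.eventually_mem (hγ0 ▸ hW.mem_nhds h0)

section LiouvilleConjugacy

variable {φ : ℝ × ℝ → ℝ × ℝ} {W : Set (ℝ × ℝ)} {κ : ℝ × ℝ → ℝ}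
  (hdet : ∀ p ∈ W, (fderiv ℝ φ p).det ≠ 0) (hκ : ∀ p ∈ W, κ p ≠ 0)
  (hform : ∀ p ∈ W, aL p = κ p • ((aL (φ p)).comp (fderiv ℝ φ p)))
include hdet hκ hform

lemma fst_eq_zero_iff_fst_map_eq_zero {p : ℝ × ℝ} (hp : p ∈ W) : p.1 = 0 ↔ (φ p).1 = 0 :=
  fst_eq_zero_iff_of_aL_eq_smul_comp (hdet p hp) (hκ p hp) (hform p hp)

lemma eventually_fst_map_yAxis_eq_zero (hW : IsOpen W) (h0 : (0 : ℝ × ℝ) ∈ W) :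
    ∀ᶠ t : ℝ in 𝓝 0, (φ (0, t)).1 = 0 := by
  filter_upwards [eventually_mem_of_continuousAt hW h0 hasDerivAt_yAxis.continuousAt rfl] with t ht
  exact (fst_eq_zero_iff_fst_map_eq_zero hdet hκ hform ht).mp rfl

lemma fst_fderiv_apply_yAxis_eq_zero (hW : IsOpen W) (h0 : (0 : ℝ × ℝ) ∈ W)
    (hφ : DifferentiableAt ℝ φ 0) : (fderiv ℝ φ 0 (0, 1)).1 = 0 :=
  (hasDerivAt_comp_curve hφ hasDerivAt_yAxis rfl).1.unique <|
    (hasDerivAt_const 0 0).congr_of_eventuallyEq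
      (eventually_fst_map_yAxis_eq_zero hdet hκ hform hW h0)

lemma snd_fderiv_apply_yAxis_eq_zero_of_eq_mul {lam : ℝ × ℝ → ℝ} (hW : IsOpen W)
    (h0 : (0 : ℝ × ℝ) ∈ W) (hφ : DifferentiableAt ℝ φ 0) (hlamd : DifferentiableAt ℝ lam 0)
    (hlam : ∀ p ∈ W, lam p ≠ 0)
    (heq : ∀ p ∈ W, p.1 - p.2 ^ 2 = lam p * ((φ p).2 - (φ p).1 ^ 2)) :
    (fderiv ℝ φ 0 (0, 1)).2 = 0 := by
  have hinv : DifferentiableAt ℝ (fun t : ℝ => -(lam (0, t))⁻¹) 0 :=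
    ((hlamd.comp 0 hasDerivAt_yAxis.differentiableAt).inv (hlam 0 h0)).neg
  have hmap : ∀ᶠ t : ℝ in 𝓝 0, (φ (0, t)).2 = t ^ 2 * -(lam (0, t))⁻¹ := by
    filter_upwards [eventually_mem_of_continuousAt hW h0 hasDerivAt_yAxis.continuousAt rfl,
      eventually_fst_map_yAxis_eq_zero hdet hκ hform hW h0] with t ht hfst
    have h := heq (0, t) ht
    rw [hfst] at h
    field_simp [hlam (0, t) ht]
    linarith
  exact (hasDerivAt_comp_curve hφ hasDerivAt_yAxis rfl).2.unique <|
    (hasDerivAt_sq_mul_zero hinv).congr_of_eventuallyEq hmap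

lemma snd_fderiv_apply_yAxis_eq_zero_of_smul_XL_eq {μ : ℝ × ℝ → ℝ} (hW : IsOpen W)
    (h0 : (0 : ℝ × ℝ) ∈ W) (hφ0 : φ 0 = 0) (hφ : DifferentiableAt ℝ φ 0)
    (hμ : ∀ p ∈ W, μ p ≠ 0)
    (heq : ∀ p ∈ W, (p.1 - p.2 ^ 2) • XL p =
      μ p • (fderiv ℝ φ p).inverse (((φ p).2 - (φ p).1 ^ 2) • XL (φ p))) :
    (fderiv ℝ φ 0 (0, 1)).2 = 0 := by
  have hmap : ∀ᶠ t : ℝ in 𝓝 0, (φ (t ^ 2, t)).2 = (φ (t ^ 2, t)).1 ^ 2 := by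
    filter_upwards [eventually_mem_of_continuousAt hW h0 hasDerivAt_parabola.continuousAt
      (by simp)] with t ht
    rcases eq_or_ne t 0 with rfl | ht0
    · simp [Prod.mk_zero_zero, hφ0]
    have hfst : (φ (t ^ 2, t)).1 ≠ 0 := fun h =>
      ht0 (pow_eq_zero_iff two_ne_zero |>.mp
        ((fst_eq_zero_iff_fst_map_eq_zero hdet hκ hform ht).mpr h))
    have h := heq (t ^ 2, t) ht
    rw [sub_self, zero_smul, eq_comm, smul_eq_zero] at h
    have := eq_zero_of_inverse_smul_XL_eq_zero (hdet _ ht) hfst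
      (h.resolve_left (hμ _ ht))
    linarith
  have hcurve := hasDerivAt_comp_curve hφ hasDerivAt_parabola (by simp)
  exact hcurve.2.unique <|
    (hasDerivAt_sq_zero hcurve.1 (by simp [Prod.mk_zero_zero, hφ0])).congr_of_eventuallyEq hmap

end LiouvilleConjugacy

/-- The germs `x − y²` and `y − x²` are not `K_{a_L}`-equivalent: no local
diffeomorphism `φ` fixing the origin with `a_L = κ·φ*(a_L)` and smooth
nonvanishing `κ, λ` satisfies `x − y² = λ·((y − x²) ∘ φ)` near the origin.
Hence the vector fields `(x − y²)·X_L` and `(y − x²)·X_L` are not orbitally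
`a_L`-conjugate. -/
theorem stmt_18 :
    (¬ ∃ (φ : ℝ × ℝ → ℝ × ℝ) (W : Set (ℝ × ℝ)) (κ lam : ℝ × ℝ → ℝ),
        IsOpen W ∧ (0 : ℝ × ℝ) ∈ W ∧ φ 0 = 0 ∧
        ContDiffOn ℝ (⊤ : ℕ∞) φ W ∧ (∀ p ∈ W, (fderiv ℝ φ p).det ≠ 0) ∧
        ContDiffOn ℝ (⊤ : ℕ∞) κ W ∧ (∀ p ∈ W, κ p ≠ 0) ∧
        ContDiffOn ℝ (⊤ : ℕ∞) lam W ∧ (∀ p ∈ W, lam p ≠ 0) ∧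
        (∀ p ∈ W, aL p = κ p • ((aL (φ p)).comp (fderiv ℝ φ p))) ∧
        (∀ p ∈ W, p.1 - p.2 ^ 2 = lam p * ((φ p).2 - (φ p).1 ^ 2))) ∧
    (¬ ∃ (φ : ℝ × ℝ → ℝ × ℝ) (W : Set (ℝ × ℝ)) (κ μ : ℝ × ℝ → ℝ),
        IsOpen W ∧ (0 : ℝ × ℝ) ∈ W ∧ φ 0 = 0 ∧
        ContDiffOn ℝ (⊤ : ℕ∞) φ W ∧ (∀ p ∈ W, (fderiv ℝ φ p).det ≠ 0) ∧
        ContDiffOn ℝ (⊤ : ℕ∞) κ W ∧ (∀ p ∈ W, κ p ≠ 0) ∧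
        ContDiffOn ℝ (⊤ : ℕ∞) μ W ∧ (∀ p ∈ W, μ p ≠ 0) ∧
        (∀ p ∈ W, aL p = κ p • ((aL (φ p)).comp (fderiv ℝ φ p))) ∧
        (∀ p ∈ W, (p.1 - p.2 ^ 2) • XL p =
          μ p • (fderiv ℝ φ p).inverse (((φ p).2 - (φ p).1 ^ 2) • XL (φ p)))) := by
  constructor
  · rintro ⟨φ, W, κ, lam, hW, h0, -, hφ, hdet, -, hκ, hlamd, hlam, hform, heq⟩
    have hφd := (hφ.differentiableOn (by simp)).differentiableAt (hW.mem_nhds h0)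
    refine apply_ne_zero_of_det_ne_zero (hdet 0 h0) (v := (0, 1)) (by simp) (Prod.ext ?_ ?_)
    · exact fst_fderiv_apply_yAxis_eq_zero hdet hκ hform hW h0 hφd
    · exact snd_fderiv_apply_yAxis_eq_zero_of_eq_mul hdet hκ hform hW h0 hφd
        ((hlamd.differentiableOn (by simp)).differentiableAt (hW.mem_nhds h0)) hlam heq
  · rintro ⟨φ, W, κ, μ, hW, h0, hφ0, hφ, hdet, -, hκ, -, hμ, hform, heq⟩
    have hφd := (hφ.differentiableOn (by simp)).differentiableAt (hW.mem_nhds h0)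
    refine apply_ne_zero_of_det_ne_zero (hdet 0 h0) (v := (0, 1)) (by simp) (Prod.ext ?_ ?_)
    · exact fst_fderiv_apply_yAxis_eq_zero hdet hκ hform hW h0 hφd
    · exact snd_fderiv_apply_yAxis_eq_zero_of_smul_XL_eq hdet hκ hform hW h0 hφ0 hφd hμ heq
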